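/- arXiv:1812.01435 — 5 statements merged into one kernel-verified Lean document; each statement's English description precedes it below -/
import Mathlib

section
/- Let $\mathcal{T}$ be a finite index set, $(a_{j-i})$ a symmetric nonnegative kernel with $a_0 = 1$ (i.e., $a_{j-i} = a_{i-j} \ge 0$ for all $i,j$ and $a_{i-i}=1$). For $\bar p \in \mathbb{R}_{>0}^{\mathcal T}$ define $\psi_i(\bar p) = p_i / \sum_{j \in \mathcal T} a_{j-i} p_j$. Then for any $\bar x \in \mathbb{R}_{\ge 0}^{\mathcal T}$ and any $\bar p \in \mathbb{R}_{>0}^{\mathcal T}$, $\sum_i x_i^2 / \psi_i(\bar x) \le \sum_i x_i^2 / \psi_i(\bar p)$ (with the convention $0/0 = 0$), i.e., the choice $\bar p = \bar x$ minimizes $\sum_i x_i^2/\psi_i(\bar p)$ over all positive vectors $\bar p$. -/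
/-!
With `K i j = a (j - i)`, the left side is the quadratic form `∑ K i j x i x j` and the right side
is `∑ K i j x i ^ 2 p j / p i`. Since `K` is symmetric, the right side is the average of
`K i j (x i ^ 2 p j / p i + x j ^ 2 p i / p j)` over the two orders of each pair, and each such term
dominates `2 K i j x i x j` by AM-GM, because `K i j ≥ 0`.
-/

open Finset

/-- With `y / 0 = 0`, both sides vanish when `x = 0` or `s = 0`. -/
theorem sq_div_div_self {F : Type*} [Field F] (x s : F) : x ^ 2 / (x / s) = x * s := by
  rcases eq_or_ne x 0 with rfl | hx
  · simp
  · rw [div_div_eq_mul_div, sq, mul_assoc, mul_div_assoc, mul_div_cancel_left₀ _ hx]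

theorem two_mul_mul_le_sq_div_mul_add_sq_div_mul {x y p q : ℝ} (hp : 0 < p) (hq : 0 < q) :
    2 * (x * y) ≤ x ^ 2 / p * q + y ^ 2 / q * p := by
  rw [div_mul_eq_mul_div, div_mul_eq_mul_div, div_add_div _ _ hp.ne' hq.ne',
    le_div_iff₀ (mul_pos hp hq)]
  nlinarith [sq_nonneg (x * q - y * p)]

theorem sum_mul_sum_le_sum_sq_div_mul_sum {ι : Type*} [Fintype ι] (K : ι → ι → ℝ)
    (hK_symm : ∀ i j, K j i = K i j) (hK_nonneg : ∀ i j, 0 ≤ K i j) (x p : ι → ℝ)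
    (hp : ∀ i, 0 < p i) :
    ∑ i, x i * ∑ j, K i j * x j ≤ ∑ i, x i ^ 2 / p i * ∑ j, K i j * p j := by
  have h_lhs : ∑ i, ∑ j, K i j * (2 * (x i * x j)) = 2 * ∑ i, x i * ∑ j, K i j * x j := by
    simp only [mul_sum]
    exact sum_congr rfl fun i _ => sum_congr rfl fun j _ => by ring
  set R := ∑ i, ∑ j, K i j * (x i ^ 2 / p i * p j) with hR
  have h_rhs : ∑ i, x i ^ 2 / p i * ∑ j, K i j * p j = R := by
    simp only [hR, mul_sum]
    exact sum_congr rfl fun i _ => sum_congr rfl fun j _ => by ring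
  have h_swap : ∑ i, ∑ j, K i j * (x j ^ 2 / p j * p i) = R := by
    rw [sum_comm]
    simp only [hR, hK_symm]
  have h_termwise : ∑ i, ∑ j, K i j * (2 * (x i * x j))
      ≤ ∑ i, ∑ j, K i j * (x i ^ 2 / p i * p j + x j ^ 2 / p j * p i) :=
    sum_le_sum fun i _ => sum_le_sum fun j _ => mul_le_mul_of_nonneg_left
      (two_mul_mul_le_sq_div_mul_add_sq_div_mul (hp i) (hp j)) (hK_nonneg i j)
  simp only [mul_add, sum_add_distrib, h_swap] at h_termwise
  rw [h_rhs]
  linarith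

theorem stmt_1_general {T : Type*} [Fintype T] [AddCommGroup T]
    (a : T → ℝ) (ha_symm : ∀ j, a (-j) = a j) (ha_nonneg : ∀ j, 0 ≤ a j)
    (x p : T → ℝ) (hp : ∀ i, 0 < p i) :
    ∑ i, x i ^ 2 / (x i / ∑ j, a (j - i) * x j) ≤
      ∑ i, x i ^ 2 / (p i / ∑ j, a (j - i) * p j) := by
  simp only [sq_div_div_self]
  simp only [div_div_eq_mul_div, mul_div_right_comm _ _ (p _)]
  exact sum_mul_sum_le_sum_sq_div_mul_sum (fun i j => a (j - i))
    (fun i j => by rw [← neg_sub, ha_symm]) (fun i j => ha_nonneg _) x p hp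

theorem stmt_1 {T : Type*} [Fintype T] [AddCommGroup T]
    (a : T → ℝ) (ha_symm : ∀ j, a (-j) = a j) (ha_nonneg : ∀ j, 0 ≤ a j)
    (ha0 : a 0 = 1)
    (x p : T → ℝ) (hx : ∀ i, 0 ≤ x i) (hp : ∀ i, 0 < p i) :
    ∑ i, x i ^ 2 / (x i / ∑ j, a (j - i) * x j) ≤
      ∑ i, x i ^ 2 / (p i / ∑ j, a (j - i) * p j) :=
  stmt_1_general a ha_symm ha_nonneg x p hp
end

section
/- Under the setup of the fairness lemma, equality $\sum_i x_i^2/\psi_i(\bar x) = \sum_i x_i^2/\psi_i(\bar p)$ for $\bar x \in \mathbb{R}_{>0}^{\mathcal T}$ holds if and only if the ratio $p_i/x_i$ is the same constant for all $i$ (assuming $a_{j-i} > 0$ connects the index set, e.g., all $a_{j-i} > 0$). -/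
theorem stmt_2 {T : Type*} [Fintype T] [AddCommGroup T]
    (a : T → ℝ) (ha_symm : ∀ j, a (-j) = a j) (ha_pos : ∀ j, 0 < a j)
    (ha0 : a 0 = 1)
    (x p : T → ℝ) (hx : ∀ i, 0 < x i) (hp : ∀ i, 0 < p i) :
    (∑ i, x i ^ 2 / (x i / ∑ j, a (j - i) * x j) =
      ∑ i, x i ^ 2 / (p i / ∑ j, a (j - i) * p j)) ↔
    (∃ c : ℝ, ∀ i, p i / x i = c) := by
  have hne : (Finset.univ : Finset T).Nonempty := ⟨0, Finset.mem_univ 0⟩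
  have hxne : ∀ i, x i ≠ 0 := fun i => (hx i).ne'
  have hpne : ∀ i, p i ≠ 0 := fun i => (hp i).ne'
  have hasym : ∀ i j : T, a (i - j) = a (j - i) := fun i j => by
    rw [← ha_symm (j - i), neg_sub]
  have hSx : ∀ i, 0 < ∑ j, a (j - i) * x j := fun i =>
    Finset.sum_pos (fun j _ => mul_pos (ha_pos _) (hx j)) hne
  have hSp : ∀ i, 0 < ∑ j, a (j - i) * p j := fun i =>
    Finset.sum_pos (fun j _ => mul_pos (ha_pos _) (hp j)) hne
  have hL : ∀ i, x i ^ 2 / (x i / ∑ j, a (j - i) * x j)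
      = x i * ∑ j, a (j - i) * x j := fun i => by
    rw [div_div_eq_mul_div, div_eq_iff (hxne i)]; ring
  have hR : ∀ i, x i ^ 2 / (p i / ∑ j, a (j - i) * p j)
      = x i ^ 2 / p i * ∑ j, a (j - i) * p j := fun i => by
    rw [div_div_eq_mul_div, div_mul_eq_mul_div, mul_comm]
  rw [Finset.sum_congr rfl fun i _ => hL i, Finset.sum_congr rfl fun i _ => hR i]
  -- key identity
  have key : ∑ i, ∑ j, a (j - i) * (p i * p j) * (x i / p i - x j / p j) ^ 2
      = 2 * (∑ i, x i ^ 2 / p i * ∑ j, a (j - i) * p j)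
        - 2 * ∑ i, x i * ∑ j, a (j - i) * x j := by
    have expand : ∀ i j : T, a (j - i) * (p i * p j) * (x i / p i - x j / p j) ^ 2
        = a (j - i) * p j * (x i ^ 2 / p i) + a (j - i) * p i * (x j ^ 2 / p j)
          - 2 * (a (j - i) * x i * x j) := by
      intro i j
      have h1 := hpne i; have h2 := hpne j
      field_simp
      ring
    calc ∑ i, ∑ j, a (j - i) * (p i * p j) * (x i / p i - x j / p j) ^ 2
        = ∑ i, ∑ j, (a (j - i) * p j * (x i ^ 2 / p i)
            + a (j - i) * p i * (x j ^ 2 / p j) - 2 * (a (j - i) * x i * x j)) := by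
          exact Finset.sum_congr rfl fun i _ => Finset.sum_congr rfl fun j _ => expand i j
      _ = (∑ i, ∑ j, a (j - i) * p j * (x i ^ 2 / p i))
            + (∑ i, ∑ j, a (j - i) * p i * (x j ^ 2 / p j))
            - ∑ i, ∑ j, 2 * (a (j - i) * x i * x j) := by
          simp [Finset.sum_add_distrib, Finset.sum_sub_distrib]
      _ = 2 * (∑ i, x i ^ 2 / p i * ∑ j, a (j - i) * p j)
            - 2 * ∑ i, x i * ∑ j, a (j - i) * x j := by
          have h2 : (∑ i, ∑ j, a (j - i) * p i * (x j ^ 2 / p j))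
              = ∑ i, ∑ j, a (j - i) * p j * (x i ^ 2 / p i) := by
            rw [Finset.sum_comm]
            exact Finset.sum_congr rfl fun i _ => Finset.sum_congr rfl fun j _ => by
              rw [hasym i j]
          rw [h2]
          have h3 : (∑ i, ∑ j, a (j - i) * p j * (x i ^ 2 / p i))
              = ∑ i, x i ^ 2 / p i * ∑ j, a (j - i) * p j := by
            refine Finset.sum_congr rfl fun i _ => ?_
            rw [Finset.mul_sum]
            exact Finset.sum_congr rfl fun j _ => by ring
          have h4 : (∑ i, ∑ j, 2 * (a (j - i) * x i * x j))
              = 2 * ∑ i, x i * ∑ j, a (j - i) * x j := by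
            rw [Finset.mul_sum]
            refine Finset.sum_congr rfl fun i _ => ?_
            rw [Finset.mul_sum, Finset.mul_sum]
            exact Finset.sum_congr rfl fun j _ => by ring
          rw [h3, h4]
          ring
  constructor
  · intro h
    have h0 : ∑ i, ∑ j, a (j - i) * (p i * p j) * (x i / p i - x j / p j) ^ 2 = 0 := by
      rw [key, h]; ring
    have hnn : ∀ i ∈ Finset.univ, ∀ j ∈ (Finset.univ : Finset T),
        0 ≤ a (j - i) * (p i * p j) * (x i / p i - x j / p j) ^ 2 := fun i _ j _ =>
      mul_nonneg (mul_nonneg (ha_pos _).le (mul_pos (hp i) (hp j)).le) (sq_nonneg _)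
    have hzero : ∀ i j : T, a (j - i) * (p i * p j) * (x i / p i - x j / p j) ^ 2 = 0 := by
      intro i j
      have := (Finset.sum_eq_zero_iff_of_nonneg
        (fun i _ => Finset.sum_nonneg (hnn i (Finset.mem_univ i)))).mp h0 i (Finset.mem_univ i)
      exact (Finset.sum_eq_zero_iff_of_nonneg (hnn i (Finset.mem_univ i))).mp this j
        (Finset.mem_univ j)
    refine ⟨p 0 / x 0, fun i => ?_⟩
    have hq := hzero i 0
    have hpp : a ((0 : T) - i) * (p i * p 0) ≠ 0 :=
      (mul_pos (ha_pos _) (mul_pos (hp i) (hp 0))).ne'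
    have hsq : (x i / p i - x 0 / p 0) ^ 2 = 0 := by
      rcases mul_eq_zero.mp hq with h' | h'
      · exact absurd h' hpp
      · exact h'
    have hf : x i / p i = x 0 / p 0 := by
      have := pow_eq_zero_iff (n := 2) (by norm_num) |>.mp hsq
      linarith [this]
    rw [div_eq_div_iff (hpne i) (hpne 0)] at hf
    rw [div_eq_div_iff (hxne i) (hxne 0)]
    linarith [hf]
  · rintro ⟨c, hc⟩
    have hpc : ∀ i, p i = c * x i := fun i => by
      have := hc i; rw [div_eq_iff (hxne i)] at this; linarith
    have hc0 : 0 < c := by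
      have := hpc 0
      nlinarith [hp 0, hx 0]
    refine Finset.sum_congr rfl fun i _ => ?_
    have hSpc : (∑ j, a (j - i) * p j) = c * ∑ j, a (j - i) * x j := by
      rw [Finset.mul_sum]
      exact Finset.sum_congr rfl fun j _ => by rw [hpc j]; ring
    rw [hSpc, hpc i]
    have h1 := hxne i; have h2 := hc0.ne'
    field_simp
end

section
/- Let $\mathcal{T}$ be a finite abelian group of size $n$ with a symmetric kernel $a_j = a_{-j} \ge 0$, $a_0 = 1$. If $\lambda > 0$ satisfies: there exists $\bar p \in \mathbb{R}_{>0}^{\mathcal T}$ with $\lambda < p_i/\sum_{j} a_{j-i} p_j$ for all $i$, then $\lambda < 1/\sum_{j \in \mathcal{T}} a_j$. Conversely, if $\lambda < 1/\sum_{j \in \mathcal{T}} a_j$, then the constant vector $\bar p = (1,\dots,1)$ witnesses $\lambda < p_i/\sum_j a_{j-i} p_j$ for all $i$. -/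
theorem stmt_3 {T : Type*} [Fintype T] [Nonempty T] [AddCommGroup T]
    (a : T → ℝ) (ha_symm : ∀ j, a (-j) = a j) (ha_nonneg : ∀ j, 0 ≤ a j)
    (ha0 : a 0 = 1) (lam : ℝ) (hlam : 0 < lam) :
    (∃ p : T → ℝ, (∀ i, 0 < p i) ∧ ∀ i, lam < p i / ∑ j, a (j - i) * p j) ↔
      lam < 1 / ∑ j, a j := by
  have hsum_shift : ∀ i : T, ∑ j, a (j - i) = ∑ j, a j := fun i =>
    Fintype.sum_equiv (Equiv.subRight i) (fun j => a (j - i)) a (fun j => rfl)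
  have hA : (0 : ℝ) < ∑ j, a j := by
    have := Finset.single_le_sum (f := a) (fun j _ => ha_nonneg j)
      (Finset.mem_univ (0 : T))
    linarith [ha0 ▸ this]
  constructor
  · rintro ⟨p, hp, hlt⟩
    set S : T → ℝ := fun i => ∑ j, a (j - i) * p j with hS
    have hSpos : ∀ i, 0 < S i := by
      intro i
      have h1 : a (i - i) * p i ≤ S i := by
        apply Finset.single_le_sum (f := fun j => a (j - i) * p j)
          (fun j _ => mul_nonneg (ha_nonneg _) (hp j).le) (Finset.mem_univ i)
      have : a (i - i) * p i = p i := by simp [ha0]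
      linarith [hp i]
    have hkey : ∀ i, lam * S i < p i := by
      intro i
      have := hlt i
      rwa [lt_div_iff₀ (hSpos i)] at this
    have hsumS : ∑ i, S i = (∑ j, a j) * ∑ j, p j := by
      rw [hS]
      simp only
      rw [Finset.sum_comm, Finset.mul_sum]
      refine Finset.sum_congr rfl fun j _ => ?_
      rw [← Finset.sum_mul,
        Fintype.sum_equiv (Equiv.subLeft j) (fun i => a (j - i)) a (fun i => rfl)]
    have hP : (0 : ℝ) < ∑ j, p j :=
      Finset.sum_pos (fun j _ => hp j) Finset.univ_nonempty
    have hsumlt : lam * ((∑ j, a j) * ∑ j, p j) < ∑ j, p j := by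
      rw [← hsumS, Finset.mul_sum]
      exact Finset.sum_lt_sum_of_nonempty Finset.univ_nonempty
        (fun i _ => hkey i)
    rw [lt_div_iff₀ hA]
    nlinarith
  · intro h
    refine ⟨fun _ => 1, fun _ => one_pos, fun i => ?_⟩
    simp only [mul_one]
    rwa [hsum_shift i]
end

section
/- Let $N \ge 1$, and for each $i = 1,\dots,N$ let $X_i \ge 0$ with $\sum_i X_i > 0$, and let $\psi_i = X_i / \sum_{j \in \mathcal{N}_i} X_j$, where each neighbourhood $\mathcal{N}_i$ contains $i$ and has $|\mathcal{N}_i| \le 2^d + 1$, and the neighbour relation is symmetric ($j \in \mathcal{N}_i \iff i \in \mathcal{N}_j$). Then $\sum_i X_i \psi_i \ge \frac{1}{2^d+1} \sum_i X_i$. -/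
/-!
By Cauchy–Schwarz in Sedrakyan's form, `(∑ X)² ≤ (∑ X² / T) · ∑ T` with `T i = ∑_{j ∈ 𝒩 i} X j`.
Since the neighbour relation is symmetric, `∑ T` counts each `X j` exactly `#(𝒩 j) ≤ 2 ^ d + 1`
times, so `∑ T ≤ (2 ^ d + 1) ∑ X`; dividing by `∑ X > 0` gives the bound.
-/

open Finset

theorem Finset.sq_sum_le_sum_sq_div_mul_sum {ι R : Type*} [Semifield R] [LinearOrder R]
    [IsStrictOrderedRing R] [ExistsAddOfLE R] (s : Finset ι) {f g : ι → R}
    (hg : ∀ i ∈ s, 0 ≤ g i) (hfg : ∀ i ∈ s, g i = 0 → f i = 0) :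
    (∑ i ∈ s, f i) ^ 2 ≤ (∑ i ∈ s, f i ^ 2 / g i) * ∑ i ∈ s, g i := by
  refine sum_sq_le_sum_mul_sum_of_sq_le_mul s
    (fun i hi ↦ div_nonneg (sq_nonneg _) (hg i hi)) hg fun i hi ↦ ?_
  rcases (hg i hi).eq_or_lt' with h | h
  · simp [hfg i hi h]
  · rw [div_mul_cancel₀ _ h.ne']

theorem Finset.sum_sum_of_symm_eq_sum_card_nsmul {ι M : Type*} [Fintype ι] [AddCommMonoid M]
    (𝒩 : ι → Finset ι) (hsymm : ∀ i j, j ∈ 𝒩 i ↔ i ∈ 𝒩 j) (f : ι → M) :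
    ∑ i, ∑ j ∈ 𝒩 i, f j = ∑ j, #(𝒩 j) • f j := by
  rw [sum_comm' (t' := univ) (s' := 𝒩) fun i j ↦ by simp [hsymm i j]]
  simp only [sum_const]

theorem Finset.sum_sum_of_symm_le_mul_sum {ι : Type*} [Fintype ι] (𝒩 : ι → Finset ι)
    (hsymm : ∀ i j, j ∈ 𝒩 i ↔ i ∈ 𝒩 j) {k : ℕ} (hcard : ∀ i, #(𝒩 i) ≤ k)
    {f : ι → ℝ} (hf : ∀ i, 0 ≤ f i) :
    ∑ i, ∑ j ∈ 𝒩 i, f j ≤ k * ∑ i, f i := by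
  rw [sum_sum_of_symm_eq_sum_card_nsmul 𝒩 hsymm, mul_sum]
  gcongr with j
  rw [nsmul_eq_mul]
  exact mul_le_mul_of_nonneg_right (by exact_mod_cast hcard j) (hf j)

theorem stmt_8 {ι : Type*} [Fintype ι] (d : ℕ) (𝒩 : ι → Finset ι)
    (hself : ∀ i, i ∈ 𝒩 i) (hcard : ∀ i, (𝒩 i).card ≤ 2 ^ d + 1)
    (hsymm : ∀ i j, j ∈ 𝒩 i ↔ i ∈ 𝒩 j)
    (X : ι → ℝ) (hX : ∀ i, 0 ≤ X i) (hpos : 0 < ∑ i, X i) :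
    (1 / (2 ^ d + 1 : ℝ)) * ∑ i, X i ≤
      ∑ i, X i * (X i / ∑ j ∈ 𝒩 i, X j) := by
  set T : ι → ℝ := fun i ↦ ∑ j ∈ 𝒩 i, X j
  have hT : ∀ i ∈ univ, 0 ≤ T i := fun i _ ↦ sum_nonneg fun j _ ↦ hX j
  have hXT : ∀ i ∈ univ, T i = 0 → X i = 0 := fun i _ h ↦
    le_antisymm (h ▸ single_le_sum (fun j _ ↦ hX j) (hself i)) (hX i)
  have hsumT : ∑ i, T i ≤ (2 ^ d + 1 : ℝ) * ∑ i, X i := by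
    exact_mod_cast sum_sum_of_symm_le_mul_sum 𝒩 hsymm hcard hX
  have hA : 0 ≤ ∑ i, X i ^ 2 / T i :=
    sum_nonneg fun i hi ↦ div_nonneg (sq_nonneg _) (hT i hi)
  have key : (∑ i, X i) * ∑ i, X i ≤ ((∑ i, X i ^ 2 / T i) * (2 ^ d + 1)) * ∑ i, X i :=
    calc (∑ i, X i) * ∑ i, X i = (∑ i, X i) ^ 2 := (sq _).symm
      _ ≤ (∑ i, X i ^ 2 / T i) * ∑ i, T i := sq_sum_le_sum_sq_div_mul_sum univ hT hXT
      _ ≤ (∑ i, X i ^ 2 / T i) * ((2 ^ d + 1) * ∑ i, X i) := by gcongr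
      _ = _ := by ring
  simp only [← mul_div_assoc, ← sq]
  rw [one_div_mul_eq_div, div_le_iff₀ (by positivity)]
  exact le_of_mul_le_mul_right key hpos
end

section
/- Let $\mathcal{T}$, $(a_{j-i})$, $\psi_i$ be as in the 2-fairness lemma and define $\psi_i^*(\bar x) = \log(1 + \psi_i(\bar x))$ and $\mathcal{C}^* = \{\bar\mu : \mu_i \le \log(1 + p_i/\sum_{j\in\mathcal N_i} p_j)\text{ for some }\bar p > 0\}$. Then with $g(x)=x^2$ and $\tilde h(y) = -1/(e^y-1)$, for every $\bar x \in \mathbb{R}_{\ge 0}^{\mathcal T}$ and every $\bar\mu \in \mathcal{C}^*$: $\sum_i g(x_i)\tilde h(\mu_i) \le \sum_i g(x_i)\tilde h(\psi_i^*(\bar x))$. -/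
theorem stmt_16 {T : Type*} [Fintype T] [AddCommGroup T]
    (a : T → ℝ) (ha_symm : ∀ j, a (-j) = a j) (ha_nonneg : ∀ j, 0 ≤ a j)
    (ha0 : a 0 = 1)
    (x μ : T → ℝ) (hx : ∀ i, 0 ≤ x i) (hμpos : ∀ i, 0 < μ i)
    (p : T → ℝ) (hp : ∀ i, 0 < p i)
    (hμ : ∀ i, μ i ≤ Real.log (1 + p i / ∑ j, a (j - i) * p j)) :
    ∑ i, x i ^ 2 * (-1 / (Real.exp (μ i) - 1)) ≤
      ∑ i, x i ^ 2 *
        (-1 / (Real.exp (Real.log (1 + x i / ∑ j, a (j - i) * x j)) - 1)) := by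
  have hsym : ∀ i j : T, a (i - j) = a (j - i) := by
    intro i j; rw [← neg_sub j i, ha_symm]
  -- RHS simplification
  have hRHS : ∀ i, x i ^ 2 * (-1 / (Real.exp (Real.log (1 + x i / ∑ j, a (j - i) * x j)) - 1))
      = -(x i * ∑ j, a (j - i) * x j) := by
    intro i
    set Ti := ∑ j, a (j - i) * x j with hTi
    have hT0 : 0 ≤ Ti := Finset.sum_nonneg fun j _ => mul_nonneg (ha_nonneg _) (hx j)
    have hxT : x i ≤ Ti := by
      have h1 : a (i - i) * x i = x i := by simp [ha0]
      calc x i = a (i - i) * x i := h1.symm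
        _ ≤ Ti := Finset.single_le_sum (f := fun j => a (j - i) * x j)
            (fun j _ => mul_nonneg (ha_nonneg _) (hx j)) (Finset.mem_univ i)
    rcases eq_or_lt_of_le hT0 with h0 | hTpos
    · have hx0 : x i = 0 := le_antisymm (h0 ▸ hxT) (hx i)
      simp [hx0]
    · have h1 : (0:ℝ) < 1 + x i / Ti := by
        have := div_nonneg (hx i) hT0; linarith
      rw [Real.exp_log h1]
      have h2 : 1 + x i / Ti - 1 = x i / Ti := by ring
      rw [h2]
      rcases eq_or_lt_of_le (hx i) with hxi0 | hxipos
      · simp [← hxi0]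
      · field_simp
  -- LHS bound
  have hLHS : ∀ i, x i ^ 2 * (-1 / (Real.exp (μ i) - 1))
      ≤ x i ^ 2 * (-((∑ j, a (j - i) * p j) / p i)) := by
    intro i
    set Si := ∑ j, a (j - i) * p j with hSi
    have hS : 0 < Si := by
      have h1 : a (i - i) * p i = p i := by simp [ha0]
      calc (0:ℝ) < p i := hp i
        _ = a (i - i) * p i := h1.symm
        _ ≤ Si := Finset.single_le_sum (f := fun j => a (j - i) * p j)
            (fun j _ => mul_nonneg (ha_nonneg _) (hp j).le) (Finset.mem_univ i)
    have h1 : (0:ℝ) < 1 + p i / Si := by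
      have := div_pos (hp i) hS; linarith
    have hexp : Real.exp (μ i) ≤ 1 + p i / Si := by
      calc Real.exp (μ i) ≤ Real.exp (Real.log (1 + p i / Si)) :=
            Real.exp_le_exp.mpr (hμ i)
        _ = 1 + p i / Si := Real.exp_log h1
    have ht : 0 < Real.exp (μ i) - 1 := by
      have := Real.add_one_le_exp (μ i)
      have := hμpos i
      linarith
    have hu : 0 < p i / Si := div_pos (hp i) hS
    have hle : -1 / (Real.exp (μ i) - 1) ≤ -(Si / p i) := by
      have h3 : 1 / (p i / Si) ≤ 1 / (Real.exp (μ i) - 1) :=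
        one_div_le_one_div_of_le ht (by linarith)
      have h4 : 1 / (p i / Si) = Si / p i := one_div_div _ _
      rw [neg_div]
      linarith [h4 ▸ h3]
    exact mul_le_mul_of_nonneg_left hle (sq_nonneg _)
  -- key middle inequality
  have key : ∀ i j : T, 2 * (a (j - i) * (x i * x j))
      ≤ a (j - i) * x i ^ 2 * p j / p i + a (j - i) * x j ^ 2 * p i / p j := by
    intro i j
    have hpi := hp i
    have hpj := hp j
    have h2 : 2 * (x i * x j) ≤ x i ^ 2 * p j / p i + x j ^ 2 * p i / p j := by
      rw [div_add_div _ _ (ne_of_gt hpi) (ne_of_gt hpj), le_div_iff₀ (by positivity)]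
      nlinarith [sq_nonneg (x i * p j - x j * p i), mul_pos hpi hpj]
    have ha := ha_nonneg (j - i)
    have := mul_le_mul_of_nonneg_left h2 ha
    calc 2 * (a (j - i) * (x i * x j)) = a (j - i) * (2 * (x i * x j)) := by ring
      _ ≤ a (j - i) * (x i ^ 2 * p j / p i + x j ^ 2 * p i / p j) := this
      _ = a (j - i) * x i ^ 2 * p j / p i + a (j - i) * x j ^ 2 * p i / p j := by ring
  -- middle step
  have step3 : ∑ i, x i * (∑ j, a (j - i) * x j)
      ≤ ∑ i, x i ^ 2 * ((∑ j, a (j - i) * p j) / p i) := by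
    have hL : ∑ i, x i * (∑ j, a (j - i) * x j)
        = ∑ i, ∑ j, a (j - i) * (x i * x j) := by
      refine Finset.sum_congr rfl fun i _ => ?_
      rw [Finset.mul_sum]
      exact Finset.sum_congr rfl fun j _ => by ring
    have hR : ∑ i, x i ^ 2 * ((∑ j, a (j - i) * p j) / p i)
        = ∑ i, ∑ j, a (j - i) * x i ^ 2 * p j / p i := by
      refine Finset.sum_congr rfl fun i _ => ?_
      rw [Finset.sum_div, Finset.mul_sum]
      exact Finset.sum_congr rfl fun j _ => by ring
    have hswap : (∑ i, ∑ j, a (j - i) * x i ^ 2 * p j / p i)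
        = ∑ i, ∑ j, a (j - i) * x j ^ 2 * p i / p j := by
      rw [Finset.sum_comm]
      exact Finset.sum_congr rfl fun i _ => Finset.sum_congr rfl fun j _ => by
        rw [hsym]
    have hsum : ∑ i, ∑ j, 2 * (a (j - i) * (x i * x j))
        ≤ ∑ i, ∑ j, (a (j - i) * x i ^ 2 * p j / p i + a (j - i) * x j ^ 2 * p i / p j) :=
      Finset.sum_le_sum fun i _ => Finset.sum_le_sum fun j _ => key i j
    have e1 : ∑ i, ∑ j, 2 * (a (j - i) * (x i * x j))
        = 2 * ∑ i, ∑ j, a (j - i) * (x i * x j) := by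
      rw [Finset.mul_sum]
      exact Finset.sum_congr rfl fun i _ => by rw [Finset.mul_sum]
    have e2 : ∑ i, ∑ j, (a (j - i) * x i ^ 2 * p j / p i + a (j - i) * x j ^ 2 * p i / p j)
        = (∑ i, ∑ j, a (j - i) * x i ^ 2 * p j / p i)
          + ∑ i, ∑ j, a (j - i) * x j ^ 2 * p i / p j := by
      rw [← Finset.sum_add_distrib]
      exact Finset.sum_congr rfl fun i _ => by rw [← Finset.sum_add_distrib]
    rw [hL, hR]
    rw [e1, e2, ← hswap] at hsum
    linarith
  calc ∑ i, x i ^ 2 * (-1 / (Real.exp (μ i) - 1))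
      ≤ ∑ i, x i ^ 2 * (-((∑ j, a (j - i) * p j) / p i)) :=
        Finset.sum_le_sum fun i _ => hLHS i
    _ ≤ ∑ i, -(x i * ∑ j, a (j - i) * x j) := by
        have h1 : ∑ i, x i ^ 2 * (-((∑ j, a (j - i) * p j) / p i))
            = -(∑ i, x i ^ 2 * ((∑ j, a (j - i) * p j) / p i)) := by
          rw [← Finset.sum_neg_distrib]
          exact Finset.sum_congr rfl fun i _ => by ring
        have h2 : ∑ i, -(x i * ∑ j, a (j - i) * x j)
            = -(∑ i, x i * ∑ j, a (j - i) * x j) := by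
          rw [← Finset.sum_neg_distrib]
        rw [h1, h2]
        linarith [step3]
    _ = ∑ i, x i ^ 2 * (-1 / (Real.exp (Real.log (1 + x i / ∑ j, a (j - i) * x j)) - 1)) :=
        (Finset.sum_congr rfl fun i _ => (hRHS i)).symm
end
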